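/- Fetch bounded by increments for the naive version-vector counter: in any configuration reached at time t by a finite execution of the naive G-Counter, for every node i, the fetch at node i (the sum of the entries of s i) is at most the total number of increment steps performed before time t (summed over all nodes). -/
import Mathlib


/-- Labels for the steps of the naive version-vector (G-Counter) model:
a local increment at node `i`, or a merge into node `i`'s replica. -/
inductive GLab (ι : Type) where
  | inc (i : ι)
  | merge (i : ι)
deriving DecidableEq

/-- `(GLab.isInc l) = true` iff `l` labels a local increment step. -/
def GLab.isInc {ι : Type} : GLab ι → Bool
  | .inc _ => true
  | .merge _ => false

/-- An execution of the naive G-Counter: `st t i : ι →₀ ℕ` is the replica of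
node `i` in the configuration at time `t`, starting from the all-zero
configuration.  Each step changes only one node `i`'s replica: a local
increment (`inc i`) adds `Finsupp.single i 1` to `s i`, and a merge replaces
`s i` by `s i ⊔ v` (pointwise maximum), where `v` is the replica of some node
`j` in some earlier configuration of the execution. -/
def GExec {ι : Type} [DecidableEq ι]
    (st : ℕ → ι → (ι →₀ ℕ)) (lab : ℕ → GLab ι) : Prop :=
  (∀ i, st 0 i = 0) ∧
  ∀ n, match lab n with
    | .inc i =>
        st (n + 1) i = st n i + Finsupp.single i 1 ∧
        ∀ j, j ≠ i → st (n + 1) j = st n j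
    | .merge i =>
        (∃ m ≤ n, ∃ j, st (n + 1) i = st n i ⊔ st m j) ∧
        ∀ j, j ≠ i → st (n + 1) j = st n j

/-- `incCount lab j t`: the number of `inc j` steps performed before time `t`. -/
def incCount {ι : Type} [DecidableEq ι] (lab : ℕ → GLab ι) (j : ι) (t : ℕ) : ℕ :=
  ((Finset.range t).filter (fun n => lab n = GLab.inc j)).card

/-- `totalIncCount lab t`: the total number of increment steps (over all
nodes) performed before time `t`. -/
def totalIncCount {ι : Type} (lab : ℕ → GLab ι) (t : ℕ) : ℕ :=
  ((Finset.range t).filter (fun n => (lab n).isInc)).card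

/-- The fetch at node `i`: the sum of all entries of its replica. -/
def gfetch {ι : Type} (st : ℕ → ι → (ι →₀ ℕ)) (t : ℕ) (i : ι) : ℕ :=
  (st t i).sum fun _ v => v

lemma incCount_mono {ι : Type} [DecidableEq ι] (lab : ℕ → GLab ι) (j : ι)
    {s t : ℕ} (h : s ≤ t) : incCount lab j s ≤ incCount lab j t := by
  apply Finset.card_le_card
  exact Finset.filter_subset_filter _ (Finset.range_subset_range.2 h)

lemma incCount_succ {ι : Type} [DecidableEq ι] (lab : ℕ → GLab ι) (j : ι) (n : ℕ) :
    incCount lab j (n + 1) =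
      (if lab n = GLab.inc j then incCount lab j n + 1 else incCount lab j n) := by
  unfold incCount
  rw [Finset.range_add_one, Finset.filter_insert]
  split
  · rw [Finset.card_insert_of_notMem (by simp)]
  · rfl

lemma entry_le_incCount {ι : Type} [DecidableEq ι]
    (st : ℕ → ι → (ι →₀ ℕ)) (lab : ℕ → GLab ι) (hexec : GExec st lab) :
    ∀ t i j, st t i j ≤ incCount lab j t := by
  intro t
  induction t using Nat.strong_induction_on with
  | _ t ih =>
    match t with
    | 0 => intro i j; simp [hexec.1 i, incCount]
    | n + 1 =>
      intro i j
      have hstep := hexec.2 n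
      have hle : incCount lab j n ≤ incCount lab j (n + 1) :=
        incCount_mono lab j (Nat.le_succ n)
      cases hl : lab n with
      | inc k =>
        rw [hl] at hstep
        by_cases hik : i = k
        · subst hik
          rw [hstep.1]
          simp only [Finsupp.add_apply, Finsupp.single_apply]
          by_cases hjk : i = j
          · subst hjk
            rw [incCount_succ, if_pos hl]
            simpa using ih n (Nat.lt_succ_self n) i i
          · simp only [if_neg hjk, add_zero]
            exact le_trans (ih n (Nat.lt_succ_self n) i j) hle
        · rw [hstep.2 i hik]
          exact le_trans (ih n (Nat.lt_succ_self n) i j) hle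
      | merge k =>
        rw [hl] at hstep
        by_cases hik : i = k
        · subst hik
          obtain ⟨m, hm, j', heq⟩ := hstep.1
          rw [heq]
          have : (st n i ⊔ st m j') j = max (st n i j) (st m j' j) := rfl
          rw [this]
          apply max_le
          · exact le_trans (ih n (Nat.lt_succ_self n) i j) hle
          · exact le_trans (ih m (Nat.lt_succ_of_le hm) j' j)
              (incCount_mono lab j (le_trans hm (Nat.le_succ n)))
        · rw [hstep.2 i hik]
          exact le_trans (ih n (Nat.lt_succ_self n) i j) hle

lemma sum_incCount_le {ι : Type} [DecidableEq ι] (lab : ℕ → GLab ι) (t : ℕ)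
    (S : Finset ι) : (∑ j ∈ S, incCount lab j t) ≤ totalIncCount lab t := by
  unfold incCount totalIncCount
  rw [← Finset.card_biUnion]
  · apply Finset.card_le_card
    intro n hn
    simp only [Finset.mem_biUnion, Finset.mem_filter] at hn ⊢
    obtain ⟨j, _, hn, hlab⟩ := hn
    exact ⟨hn, by rw [hlab]; rfl⟩
  · intro x _ y _ hxy
    simp only [Finset.disjoint_left, Finset.mem_filter]
    rintro n ⟨_, h1⟩ ⟨_, h2⟩
    exact hxy (by have := h1.symm.trans h2; injection this)

/-- Fetch bounded by increments for the naive version-vector counter: in any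
configuration reached at time `t` by a finite execution of the naive
G-Counter, for every node `i` the fetch at node `i` (the sum of the entries of
`s i`) is at most the total number of increment steps performed before time
`t` (summed over all nodes). -/
theorem gcounter_fetch_bounded_by_increments {ι : Type} [DecidableEq ι]
    (st : ℕ → ι → (ι →₀ ℕ)) (lab : ℕ → GLab ι) (hexec : GExec st lab)
    (t : ℕ) (i : ι) :
    gfetch st t i ≤ totalIncCount lab t := by
  have h1 : gfetch st t i = ∑ j ∈ (st t i).support, st t i j := rfl
  rw [h1]
  calc (∑ j ∈ (st t i).support, st t i j)
      ≤ ∑ j ∈ (st t i).support, incCount lab j t :=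
        Finset.sum_le_sum fun j _ => entry_le_incCount st lab hexec t i j
    _ ≤ totalIncCount lab t := sum_incCount_le lab t _
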